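/- Let E be a finite meet-semilattice and let A be the unitization over ℂ of the semigroup algebra MonoidAlgebra ℂ E. For e ∈ E set p_e := e · ∏_{f ∈ E, e ⊓ f ≠ e} (1 − f) ∈ A, and let X denote the set of minimal nonzero elements of Ẽ := { e₀(1−e₁)⋯(1−e_n) ∈ A : e_i ∈ E } \ {0} (with q ≤ p iff q p = q). Then the map e ↦ p_e is a bijection from E onto X; in particular every minimal nonzero element of Ẽ equals p_e for exactly one e ∈ E. -/

import Mathlib

/-!
Each `g : E` gives a character `χ_g : A → ℂ` extending `e ↦ [g ≤ e]`. Together with the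
coefficient of the unit, these characters separate the points of `A`: a nonzero `x` in the
semigroup algebra is detected by the character at a maximal element of its support. Now
`χ_g (p_e) = δ_{g e}`, so `p_e` is nonzero and absorbs any `q` by `p_e q = χ_e(q) p_e`, while on
`Ẽ` every character takes values in `{0, 1}` and some character is nonzero. Hence `q ≤ p_e` forces
`q = p_e`, and a minimal `q` with `χ_g q = 1` satisfies `p_g ≤ q`, so `q = p_g`.
-/

/-- A meet-semilattice regarded as a commutative semigroup with product `e * f = e ⊓ f`. -/
instance semilatticeInfCommSemigroup (E : Type*) [SemilatticeInf E] : CommSemigroup E where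
  mul := (· ⊓ ·)
  mul_assoc := inf_assoc
  mul_comm := inf_comm

/-- The canonical image of `e : E` in the unitization over `ℂ` of the semigroup
algebra `MonoidAlgebra ℂ E`. -/
noncomputable def semilatticeBasis {E : Type*} [SemilatticeInf E] (e : E) :
    Unitization ℂ (MonoidAlgebra ℂ E) :=
  Unitization.inr (MonoidAlgebra.single e (1 : ℂ))

/-- The set `Ẽ` of nonzero elements of the form `e₀ (1-e₁) ⋯ (1-eₙ)`. -/
def tildeE (E : Type*) [SemilatticeInf E] : Set (Unitization ℂ (MonoidAlgebra ℂ E)) :=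
  {p | p ≠ 0 ∧ ∃ (e₀ : E) (es : List E),
    p = semilatticeBasis e₀ * (es.map fun e => 1 - semilatticeBasis e).prod}

/-- The set `X` of minimal nonzero elements of `Ẽ`, where `q ≤ p` iff `q p = q`. -/
def minimalsE (E : Type*) [SemilatticeInf E] : Set (Unitization ℂ (MonoidAlgebra ℂ E)) :=
  {p | p ∈ tildeE E ∧ ∀ q ∈ tildeE E, q * p = q → q = p}

/-- The element `p_e = e ∏_{f : e ⊓ f ≠ e} (1 - f)`. -/
noncomputable def minProj {E : Type*} [SemilatticeInf E] [Fintype E] [DecidableEq E] (e : E) :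
    Unitization ℂ (MonoidAlgebra ℂ E) :=
  semilatticeBasis e *
    ∏ f ∈ Finset.univ.filter (fun f => e ⊓ f ≠ e), (1 - semilatticeBasis f)

open Unitization

section Character

open scoped Classical

variable {E : Type*} [SemilatticeInf E]

noncomputable def upperIndicator (g : E) : E →ₙ* ℂ where
  toFun e := if g ≤ e then 1 else 0
  map_mul' a b := by
    change (if g ≤ a ⊓ b then (1 : ℂ) else 0) = _
    simp only [le_inf_iff]
    split_ifs <;> simp_all

noncomputable def semilatticeChar (g : E) : Unitization ℂ (MonoidAlgebra ℂ E) →ₐ[ℂ] ℂ :=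
  Unitization.lift (MonoidAlgebra.liftMagma ℂ (upperIndicator g))

lemma semilatticeChar_inr (g : E) (x : MonoidAlgebra ℂ E) :
    semilatticeChar g (inr x) = x.coeff.sum fun f c => if g ≤ f then c else 0 := by
  simp [semilatticeChar, upperIndicator, MonoidAlgebra.liftMagma_apply_apply, Finsupp.sum]

lemma semilatticeChar_apply (g : E) (a : Unitization ℂ (MonoidAlgebra ℂ E)) :
    semilatticeChar g a = a.fst + semilatticeChar g (inr a.snd) := by
  conv_lhs => rw [← inl_fst_add_inr_snd_eq a, map_add, ← algebraMap_eq_inl, AlgHom.commutes]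
  rfl

lemma semilatticeChar_basis (g e : E) :
    semilatticeChar g (semilatticeBasis e) = if g ≤ e then 1 else 0 := by
  simp [semilatticeBasis, semilatticeChar_inr]

lemma MonoidAlgebra.eq_zero_of_forall_semilatticeChar_eq_zero {x : MonoidAlgebra ℂ E}
    (h : ∀ g, semilatticeChar g (inr x) = 0) : x = 0 := by
  by_contra hx
  obtain ⟨m, hm⟩ := x.coeff.support.exists_maximal
    (Finsupp.support_nonempty_iff.2 (by simpa using hx))
  have hcoeff : semilatticeChar m (inr x) = x.coeff m := by
    rw [semilatticeChar_inr, Finsupp.sum, Finset.sum_eq_single m]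
    · simp
    · intro f hf hfm
      rw [if_neg fun hmf => hfm (hm.eq_of_le hf hmf).symm]
    · intro hm'
      exact absurd hm.prop hm'
  exact Finsupp.mem_support_iff.1 hm.prop (hcoeff ▸ h m)

lemma Unitization.ext_semilatticeChar {a b : Unitization ℂ (MonoidAlgebra ℂ E)}
    (hfst : a.fst = b.fst) (h : ∀ g, semilatticeChar g a = semilatticeChar g b) : a = b := by
  refine Unitization.ext hfst (sub_eq_zero.1 ?_)
  refine MonoidAlgebra.eq_zero_of_forall_semilatticeChar_eq_zero fun g => ?_
  have hg := h g
  rw [semilatticeChar_apply, semilatticeChar_apply g b, hfst, add_left_cancel_iff] at hg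
  rw [inr_sub, map_sub, hg, sub_self]

lemma fst_semilatticeBasis_mul (e : E) (a : Unitization ℂ (MonoidAlgebra ℂ E)) :
    (semilatticeBasis e * a).fst = 0 := by
  rw [fst_mul, semilatticeBasis, fst_inr, zero_mul]

lemma fst_eq_zero_of_mem_tildeE {p : Unitization ℂ (MonoidAlgebra ℂ E)} (hp : p ∈ tildeE E) :
    p.fst = 0 := by
  obtain ⟨-, e₀, es, rfl⟩ := hp
  exact fst_semilatticeBasis_mul _ _

lemma exists_semilatticeChar_ne_zero_of_mem_tildeE {p : Unitization ℂ (MonoidAlgebra ℂ E)}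
    (hp : p ∈ tildeE E) : ∃ g, semilatticeChar g p ≠ 0 := by
  by_contra! h
  exact hp.1 (Unitization.ext_semilatticeChar (by rw [fst_eq_zero_of_mem_tildeE hp, fst_zero])
    fun g => by rw [h g, map_zero])

lemma semilatticeChar_eq_zero_or_one_of_mem_tildeE {p : Unitization ℂ (MonoidAlgebra ℂ E)}
    (hp : p ∈ tildeE E) (g : E) : semilatticeChar g p = 0 ∨ semilatticeChar g p = 1 := by
  obtain ⟨-, e₀, es, rfl⟩ := hp
  rw [map_mul, map_list_prod, List.map_map, semilatticeChar_basis]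
  split_ifs
  · by_cases hzero : (0 : ℂ) ∈ es.map (semilatticeChar g ∘ fun e => 1 - semilatticeBasis e)
    · exact .inl (by rw [List.prod_eq_zero hzero, mul_zero])
    · refine .inr ((one_mul _).trans (List.prod_eq_one fun c hc => ?_))
      obtain ⟨e, he, rfl⟩ := List.mem_map.1 hc
      simp only [Function.comp_apply, map_sub, map_one, semilatticeChar_basis]
      split_ifs with hge
      · exact absurd (List.mem_map.2 ⟨e, he, by simp [semilatticeChar_basis, hge]⟩) hzero
      · exact sub_zero 1
  · exact .inl (zero_mul _)

end Character

section MinProj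

variable {E : Type*} [SemilatticeInf E] [Fintype E] [DecidableEq E]

lemma semilatticeChar_minProj (g e : E) :
    semilatticeChar g (minProj e) = if g = e then 1 else 0 := by
  simp only [minProj, map_mul, map_prod, map_sub, map_one, semilatticeChar_basis]
  by_cases hge : g = e
  · subst hge
    rw [if_pos le_rfl, one_mul, if_pos rfl, Finset.prod_eq_one]
    intro f hf
    rw [if_neg fun hgf => (Finset.mem_filter.1 hf).2 (inf_eq_left.2 hgf), sub_zero]
  · rw [if_neg hge]
    by_cases hle : g ≤ e
    · have hg : g ∈ Finset.univ.filter fun f => e ⊓ f ≠ e :=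
        Finset.mem_filter.2 ⟨Finset.mem_univ g, by rwa [inf_eq_right.2 hle]⟩
      rw [Finset.prod_eq_zero hg (by rw [if_pos le_rfl, sub_self]), mul_zero]
    · rw [if_neg hle, zero_mul]

lemma minProj_mem_tildeE (e : E) : minProj e ∈ tildeE E := by
  refine ⟨fun h => ?_, e, (Finset.univ.filter fun f => e ⊓ f ≠ e).toList, ?_⟩
  · simpa [h] using semilatticeChar_minProj e e
  · rw [minProj, Finset.prod_map_toList]

lemma minProj_mul (e : E) (a : Unitization ℂ (MonoidAlgebra ℂ E)) :
    minProj e * a = semilatticeChar e a • minProj e := by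
  refine Unitization.ext_semilatticeChar ?_ fun g => ?_
  · rw [fst_smul, minProj, mul_assoc, fst_semilatticeBasis_mul, fst_semilatticeBasis_mul,
      smul_zero]
  · rw [map_mul, map_smul, semilatticeChar_minProj, smul_eq_mul]
    split_ifs with hge
    · rw [hge, one_mul, mul_one]
    · rw [zero_mul, mul_zero]

lemma mul_minProj (a : Unitization ℂ (MonoidAlgebra ℂ E)) (e : E) :
    a * minProj e = semilatticeChar e a • minProj e := by
  rw [← minProj_mul]
  refine Unitization.ext_semilatticeChar ?_ fun g => by rw [map_mul, map_mul, mul_comm]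
  rw [fst_mul, fst_mul, mul_comm]

end MinProj

theorem stmt_3 {E : Type*} [SemilatticeInf E] [Fintype E] [DecidableEq E] :
    Set.BijOn (fun e : E => minProj e) Set.univ (minimalsE E) := by
  refine ⟨fun e _ => ⟨minProj_mem_tildeE e, fun q hq hle => ?_⟩, fun e _ e' _ h => ?_,
    fun q ⟨hq, hmin⟩ => ?_⟩
  · rw [mul_minProj] at hle
    have hne : semilatticeChar e q ≠ 0 := fun h0 => hq.1 (by rw [← hle, h0, zero_smul])
    rw [← hle, (semilatticeChar_eq_zero_or_one_of_mem_tildeE hq e).resolve_left hne, one_smul]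
  · by_contra hne
    simpa [semilatticeChar_minProj, hne] using congrArg (semilatticeChar e) h
  · obtain ⟨g, hg⟩ := exists_semilatticeChar_ne_zero_of_mem_tildeE hq
    have hg1 := (semilatticeChar_eq_zero_or_one_of_mem_tildeE hq g).resolve_left hg
    refine ⟨g, Set.mem_univ g, hmin _ (minProj_mem_tildeE g) ?_⟩
    rw [minProj_mul, hg1, one_smul]
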